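/- In the majority protocol, define E := {q : maj(q) ∈ {y, n, Ȳ, N̄}} (states engaged in the majority computation), E_M := E ∩ Q_M and E_m := E ∩ Q_m (intersections with the majority and minority groups). Then #E_M(Cᵢ) = #E_m(Cᵢ) holds in every configuration of any execution from an initial configuration. -/
import Mathlib


/-- A transition set: `((p,q), s, (p',q'))` where `s = true` encodes the data
comparison `=` and `s = false` encodes `≠`. -/
abbrev PTrans (Q : Type*) := Set ((Q × Q) × Bool × (Q × Q))

/-- The configuration with a single agent of datum `d` in state `q`. -/
noncomputable def sing {D Q : Type*} (d : D) (q : Q) : D →₀ (Q →₀ ℕ) :=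
  Finsupp.single d (Finsupp.single q 1)

/-- One step of a population protocol with unordered data. -/
def Step {D Q : Type*} (δ : PTrans Q) (C C' : D →₀ (Q →₀ ℕ)) : Prop :=
  ∃ (p q p' q' : Q) (s : Bool) (d e : D),
    ((p, q), s, (p', q')) ∈ δ ∧ (if s then d = e else d ≠ e) ∧
    sing d p + sing e q ≤ C ∧
    C' = C - (sing d p + sing e q) + (sing d p' + sing e q')

/-- Reachability: reflexive-transitive closure of the step relation. -/
def Reach {D Q : Type*} (δ : PTrans Q) : (D →₀ (Q →₀ ℕ)) → (D →₀ (Q →₀ ℕ)) → Prop :=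
  Relation.ReflTransGen (Step δ)

/-- The embedding order on configurations. -/
def Embeds {D Q : Type*} (C C' : D →₀ (Q →₀ ℕ)) : Prop :=
  ∃ ρ : D ↪ D, ∀ d, C d ≤ C' (ρ d)

/-- An execution of the protocol. -/
def IsExec {D Q : Type*} (δ : PTrans Q) (e : ℕ → (D →₀ (Q →₀ ℕ))) : Prop :=
  ∀ i, Step δ (e i) (e (i + 1))

/-- Fairness: any configuration reachable from infinitely many configurations of the
execution occurs infinitely often along the execution. -/
def Fair {D Q : Type*} (δ : PTrans Q) (e : ℕ → (D →₀ (Q →₀ ℕ))) : Prop :=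
  ∀ C', {i | Reach δ (e i) C'}.Infinite → {i | e i = C'}.Infinite

/-- The execution converges to the output value given by the proposition `P`
(`true` if `P` holds, `false` otherwise): from some point on, every agent's state
has that output. -/
def Converges {D Q : Type*} (O : Q → Bool) (e : ℕ → (D →₀ (Q →₀ ℕ))) (P : Prop) : Prop :=
  ∃ τ, ∀ i, τ ≤ i → ∀ d q, 0 < e i d q → (O q = true ↔ P)


/-- The majority values of the majority protocol. -/
inductive MajVal | Y | N | Ybar | Nbar | y | n
deriving DecidableEq

/-- A state of the majority protocol: the macros `pair`, `grp`, `even` and `maj`. -/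
structure MajState where
  pair : Bool
  grp : Bool
  even : Bool
  maj : MajVal
deriving DecidableEq

open MajVal in
/-- The transitions of the majority protocol: rules (1)–(14), together with the
implicit identity transitions.  The Boolean `s` in `((p,q),s,(p',q'))` is `true` for
the color precondition `d₁ = d₂` and `false` for `d₁ ≠ d₂`. -/
def MajRule : ((MajState × MajState) × Bool × (MajState × MajState)) → Prop :=
  fun t =>
  let p := t.1.1; let q := t.1.2; let s := t.2.1; let p' := t.2.2.1; let q' := t.2.2.2
  -- implicit identity transitions
  (p' = p ∧ q' = q) ∨
  -- (1) pairing
  (s = false ∧ p.pair = false ∧ q.pair = false ∧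
    p' = { p with pair := true, even := true } ∧
    q' = { q with pair := true, even := true }) ∨
  -- (2)
  (s = false ∧ p.pair = false ∧ q.pair = true ∧ q.grp = true ∧ q.maj = Y ∧
    p' = p ∧ q' = { q with grp := false, maj := N }) ∨
  -- (3)
  (s = true ∧ p.pair = false ∧ q.pair = true ∧ q.grp = false ∧ q.maj = N ∧
    p' = p ∧ q' = { q with grp := true, maj := Y }) ∨
  -- (4)
  (s = false ∧ p.pair = false ∧ q.pair = true ∧ q.grp = true ∧ (q.maj = y ∨ q.maj = n) ∧
    p' = p ∧ q' = { q with maj := Nbar }) ∨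
  -- (5)
  (s = true ∧ p.pair = false ∧ q.pair = true ∧ q.grp = false ∧ (q.maj = y ∨ q.maj = n) ∧
    p' = p ∧ q' = { q with maj := Ybar }) ∨
  -- (6)
  (p.grp = true ∧ p.maj = Nbar ∧ q.grp = false ∧ (q.maj = y ∨ q.maj = n) ∧
    p' = { p with grp := false, maj := N } ∧ q' = { q with maj := N }) ∨
  -- (7)
  (p.grp = false ∧ p.maj = Ybar ∧ q.grp = true ∧ (q.maj = y ∨ q.maj = n) ∧
    p' = { p with grp := true, maj := Y } ∧ q' = { q with maj := Y }) ∨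
  -- (8)
  (p.grp = true ∧ p.maj = Nbar ∧ q.grp = false ∧ q.maj = Ybar ∧
    p' = { p with grp := false, maj := n } ∧ q' = { q with grp := true, maj := n }) ∨
  -- (9)
  (p.pair = false ∧ q.even = true ∧ p' = p ∧ q' = { q with even := false }) ∨
  -- (10)
  (p.pair = true ∧ p.even = true ∧ q.pair = true ∧ q.even = false ∧
    p' = p ∧ q' = { q with even := true }) ∨
  -- (11)
  (p.maj = Y ∧ q.maj = N ∧ p' = { p with maj := n } ∧ q' = { q with maj := n }) ∨
  -- (12)
  (p.maj = Y ∧ q.maj = n ∧ p' = p ∧ q' = { q with maj := y }) ∨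
  -- (13)
  (p.maj = N ∧ q.maj = y ∧ p' = p ∧ q' = { q with maj := n }) ∨
  -- (14)
  (p.maj = n ∧ q.maj = y ∧ p' = p ∧ q' = { q with maj := n })

/-- The transition set of the majority protocol. -/
def majDelta : PTrans MajState := {t | MajRule t}

/-- The unique initial state of the majority protocol:
unpaired, in the majority group, even bit false, majority value `Y`. -/
def majInit : MajState := ⟨false, true, false, MajVal.Y⟩

/-- The number of agents of `C` whose state satisfies `S`. -/
noncomputable def cardB {D Q : Type*} (S : Q → Bool) (C : D →₀ (Q →₀ ℕ)) : ℕ :=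
  C.sum fun _ f => f.sum fun q c => if S q then c else 0

open MajVal in
/-- A state is engaged in the majority computation if its majority value is in
`{y, n, Ȳ, N̄}`. -/
def engaged (q : MajState) : Bool :=
  decide (q.maj = y ∨ q.maj = n ∨ q.maj = Ybar ∨ q.maj = Nbar)

section Aux

variable {D Q : Type*}

lemma cardB_add (S : Q → Bool) (C C' : D →₀ (Q →₀ ℕ)) :
    cardB S (C + C') = cardB S C + cardB S C' := by
  unfold cardB
  rw [Finsupp.sum_add_index']
  · intro d; simp
  · intro d f g
    rw [Finsupp.sum_add_index']
    · intro q; simp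
    · intro q a b; split <;> simp

lemma cardB_sing (S : Q → Bool) (d : D) (p : Q) :
    cardB S (sing d p) = if S p then 1 else 0 := by
  unfold cardB sing
  rw [Finsupp.sum_single_index, Finsupp.sum_single_index]
  · split <;> simp
  · rw [Finsupp.sum_zero_index]

lemma cardB_sub_add (S : Q → Bool) {X C : D →₀ (Q →₀ ℕ)} (h : X ≤ C) :
    cardB S (C - X) + cardB S X = cardB S C := by
  have hCX : (C - X) + X = C := by
    ext d q
    have hXC : X d q ≤ C d q := by
      have := Finsupp.le_def.mp h d
      exact Finsupp.le_def.mp this q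
    simp [Nat.sub_add_cancel hXC]
  conv_rhs => rw [← hCX]
  rw [cardB_add]

lemma cardB_zero_of (S : Q → Bool) (C : D →₀ (Q →₀ ℕ))
    (h : ∀ d q, 0 < C d q → S q = false) : cardB S C = 0 := by
  unfold cardB
  apply Finset.sum_eq_zero
  intro d _
  apply Finset.sum_eq_zero
  intro q hq
  have hq' : C d q ≠ 0 := Finsupp.mem_support_iff.mp hq
  have := h d q (Nat.pos_of_ne_zero hq')
  simp [this]

open MajVal in
/-- The pointwise state invariant: a `Y` agent is in the majority group, an `N` agent
in the minority group. -/
def Pst (st : MajState) : Prop :=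
  (st.maj = Y → st.grp = true) ∧ (st.maj = N → st.grp = false)

lemma pos_sing {D : Type*} [DecidableEq D] {a : D} {p : MajState} {d : D} {q : MajState}
    (h : 0 < sing a p d q) : q = p := by
  by_contra hc
  unfold sing at h
  rw [Finsupp.single_apply] at h
  split at h
  · rw [Finsupp.single_apply] at h
    simp [Ne.symm hc] at h
  · simp at h

open MajVal in
lemma maj_pst (p q p' q' : MajState) (s : Bool)
    (h : MajRule ((p, q), s, (p', q'))) (hp : Pst p) (hq : Pst q) :
    Pst p' ∧ Pst q' := by
  obtain ⟨pp, pg, pe, pm⟩ := p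
  obtain ⟨qp, qg, qe, qm⟩ := q
  simp only [MajRule] at h
  rcases h with ⟨h1, h2⟩ | ⟨_, _, _, h1, h2⟩ | ⟨_, _, _, _, _, h1, h2⟩ |
    ⟨_, _, _, _, _, h1, h2⟩ | ⟨_, _, _, _, hm, h1, h2⟩ | ⟨_, _, _, _, hm, h1, h2⟩ |
    ⟨_, _, _, hm, h1, h2⟩ | ⟨_, _, _, hm, h1, h2⟩ | ⟨_, _, _, _, h1, h2⟩ |
    ⟨_, _, h1, h2⟩ | ⟨_, _, _, _, h1, h2⟩ | ⟨_, _, h1, h2⟩ | ⟨_, _, h1, h2⟩ |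
    ⟨_, _, h1, h2⟩ | ⟨_, _, h1, h2⟩ <;>
    subst h1 h2 <;> subst_vars <;>
    constructor <;> constructor <;> intro hmaj <;> simp_all [Pst]

open MajVal in
lemma maj_inv {D : Type*} (e : ℕ → (D →₀ (MajState →₀ ℕ)))
    (h0 : ∀ d q, 0 < e 0 d q → q = majInit)
    (hexec : IsExec majDelta e) :
    ∀ i d q, 0 < e i d q → Pst q := by
  intro i
  induction i with
  | zero =>
    intro d q h
    rw [h0 d q h]
    exact ⟨fun _ => rfl, fun h => by simp [majInit] at h⟩
  | succ i ih =>
    classical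
    intro d q hpos
    obtain ⟨p, q', p', q'', s, a, b, hrule, _, hle, hC'⟩ := hexec i
    rw [hC'] at hpos
    rw [Finsupp.add_apply, Finsupp.add_apply] at hpos
    have hcases : 0 < (e i - (sing a p + sing b q')) d q ∨
        0 < (sing a p' + sing b q'') d q := by omega
    have hpq := maj_pst p q' p' q'' s hrule
      (ih a p (lt_of_lt_of_le (by simp [sing, Finsupp.single_apply])
        (Finsupp.le_def.mp (Finsupp.le_def.mp hle a) p)))
      (ih b q' (lt_of_lt_of_le (by simp [sing, Finsupp.single_apply])
        (Finsupp.le_def.mp (Finsupp.le_def.mp hle b) q')))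
    rcases hcases with hc | hc
    · have : (e i - (sing a p + sing b q')) d q ≤ e i d q := by
        rw [Finsupp.tsub_apply, Finsupp.tsub_apply]
        exact Nat.sub_le _ _
      exact ih d q (lt_of_lt_of_le hc this)
    · rw [Finsupp.add_apply, Finsupp.add_apply] at hc
      rcases (by omega : 0 < sing a p' d q ∨ 0 < sing b q'' d q) with h'' | h''
      · exact pos_sing h'' ▸ hpq.1
      · exact pos_sing h'' ▸ hpq.2

open MajVal in
lemma maj_key (p q p' q' : MajState) (s : Bool)
    (hp : Pst p) (hq : Pst q)
    (h : MajRule ((p, q), s, (p', q'))) :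
    (if engaged p' && p'.grp then 1 else 0) + (if engaged q' && q'.grp then 1 else 0)
      + (if engaged p && ! p.grp then 1 else 0) + (if engaged q && ! q.grp then 1 else 0)
    = (if engaged p' && ! p'.grp then 1 else 0) + (if engaged q' && ! q'.grp then 1 else 0)
      + (if engaged p && p.grp then 1 else 0) + (if engaged q && q.grp then 1 else 0) := by
  obtain ⟨pp, pg, pe, pm⟩ := p
  obtain ⟨qp, qg, qe, qm⟩ := q
  simp only [MajRule] at h
  obtain ⟨hpY, hpN⟩ := hp
  obtain ⟨hqY, hqN⟩ := hq
  rcases h with ⟨h1, h2⟩ | ⟨_, _, _, h1, h2⟩ | ⟨_, _, _, _, _, h1, h2⟩ |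
    ⟨_, _, _, _, _, h1, h2⟩ | ⟨_, _, _, _, hm, h1, h2⟩ | ⟨_, _, _, _, hm, h1, h2⟩ |
    ⟨_, _, _, hm, h1, h2⟩ | ⟨_, _, _, hm, h1, h2⟩ | ⟨_, _, _, _, h1, h2⟩ |
    ⟨_, _, h1, h2⟩ | ⟨_, _, _, _, h1, h2⟩ | ⟨_, _, h1, h2⟩ | ⟨_, _, h1, h2⟩ |
    ⟨_, _, h1, h2⟩ | ⟨_, _, h1, h2⟩ <;>
    subst h1 h2 <;> subst_vars <;>
    first
      | rfl
      | (rcases hm with hm | hm <;> subst hm <;> simp_all [engaged] <;>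
          first | omega | (cases pg <;> cases qg <;> simp))
      | (simp_all [engaged] <;> first | omega | (cases pg <;> cases qg <;> simp_all))

end Aux

/-- In every configuration of any execution of the majority protocol from an initial
configuration, the number of engaged agents in the majority group equals the number of
engaged agents in the minority group: `#E_M = #E_m`. -/
theorem maj_engaged_balance {D : Type*} (e : ℕ → (D →₀ (MajState →₀ ℕ)))
    (h0 : ∀ d q, 0 < e 0 d q → q = majInit)
    (hexec : IsExec majDelta e) (i : ℕ) :
    cardB (fun q => engaged q && q.grp) (e i) =
      cardB (fun q => engaged q && ! q.grp) (e i) := by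
  induction i with
  | zero =>
    rw [cardB_zero_of _ _ (fun d q h => by rw [h0 d q h]; rfl),
      cardB_zero_of _ _ (fun d q h => by rw [h0 d q h]; rfl)]
  | succ i ih =>
    obtain ⟨p, q, p', q', s, d, d', hrule, _, hle, hC'⟩ := hexec i
    classical
    have hpP := maj_inv e h0 hexec i d p (lt_of_lt_of_le
      (by simp [sing, Finsupp.single_apply])
      (Finsupp.le_def.mp (Finsupp.le_def.mp hle d) p))
    have hqP := maj_inv e h0 hexec i d' q (lt_of_lt_of_le
      (by simp [sing, Finsupp.single_apply])
      (Finsupp.le_def.mp (Finsupp.le_def.mp hle d') q))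
    have key := maj_key p q p' q' s hpP hqP hrule
    set S₁ : MajState → Bool := fun q => engaged q && q.grp with hS₁
    set S₂ : MajState → Bool := fun q => engaged q && ! q.grp with hS₂
    have h1 := cardB_sub_add S₁ hle
    have h2 := cardB_sub_add S₂ hle
    rw [hC', cardB_add, cardB_add, cardB_add, cardB_add,
      cardB_sing, cardB_sing, cardB_sing, cardB_sing] at *
    simp only [hS₁, hS₂] at *
    omega
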